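/- arXiv:1611.00749 — 3 statements merged into one kernel-verified Lean document; each statement's English description precedes it below -/
import Mathlib

section
/- For integers n ≥ s ≥ 1, the alternating sum ∑_{i=0}^{s-1} (-1)^{s-1+i} * C(n-i-1, s-i-1) * C(n, i) equals 1. -/
open Ring Finset

lemma choose_neg_int (m j : ℕ) :
    Ring.choose (-(m+1) : ℤ) j = (-1)^j * ((m+j).choose j) := by
  rw [Ring.choose]
  show Ring.multichoose ((-(m+1) : ℤ) - j + 1) j = _
  have : ((-(m+1) : ℤ) - j + 1) = -(m + j : ℕ) := by push_cast; ring
  rw [this]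
  show Int.multichoose (-(m + j : ℕ)) j = _
  rcases Nat.eq_zero_or_pos (m + j) with h | h
  · obtain ⟨hm, hj⟩ := Nat.add_eq_zero.mp h
    subst hm hj; rfl
  · have : (-(m + j : ℕ) : ℤ) = Int.negSucc (m + j - 1) := by
      rw [Int.negSucc_eq]; push_cast [Nat.cast_sub h]; ring
    rw [this]
    show ((-1)^j * Nat.choose (m + j - 1 + 1) j : ℤ) = _
    rw [Nat.sub_add_cancel h]

lemma vand (m k r : ℕ) :
    ∑ j ∈ Finset.range (r+1), (-1:ℤ)^j * ((m+j).choose j) * ((m+k+1).choose (r-j))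
      = (k.choose r : ℤ) := by
  have h := Ring.add_choose_eq (r := (-(m+1) : ℤ)) (s := ((m+k+1 : ℕ) : ℤ)) r (Commute.all _ _)
  have hsum : (-(m+1) : ℤ) + ((m+k+1 : ℕ) : ℤ) = (k : ℕ) := by push_cast; ring
  rw [hsum, Ring.choose_natCast] at h
  rw [Finset.Nat.sum_antidiagonal_eq_sum_range_succ_mk] at h
  rw [h]
  refine Finset.sum_congr rfl fun j hj => ?_
  rw [choose_neg_int, Ring.choose_natCast, mul_assoc]

theorem stmt2 (n s : ℕ) (hs : 1 ≤ s) (hsn : s ≤ n) :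
    ∑ i ∈ Finset.range s,
      (-1 : ℤ) ^ (s - 1 + i) * ((n - i - 1).choose (s - i - 1)) * (n.choose i) = 1 := by
  set m := n - s with hm
  have key := vand m (s-1) (s-1)
  rw [Nat.choose_self] at key
  have hrange : s - 1 + 1 = s := Nat.succ_pred_eq_of_pos hs
  rw [hrange] at key
  have hn : m + (s-1) + 1 = n := by omega
  rw [hn] at key
  rw [Nat.cast_one] at key
  refine Eq.trans ?_ key
  rw [← Finset.sum_range_reflect (fun j => (-1:ℤ)^j * ((m+j).choose j) * (n.choose (s-1-j))) s]
  refine Finset.sum_congr rfl fun i hi => ?_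
  have hi' : i < s := Finset.mem_range.mp hi
  have e1 : s - 1 - i + 2 * i = s - 1 + i := by omega
  have e2 : m + (s - 1 - i) = n - i - 1 := by omega
  have e3 : s - 1 - i = s - i - 1 := by omega
  have e4 : s - 1 - (s - 1 - i) = i := by omega
  rw [e4, e2, e3, ← e1, pow_add, pow_mul, neg_one_sq, one_pow, mul_one]
  rw [e3]
end

section
/- Suppose e : ℕ × ℕ → ℤ satisfies e(1, n) = 1 for all n ≥ 1, and for all 2 ≤ s ≤ n the recurrence e(s,n) = ∑_{i=2}^{s} (χ̄(i,n) - χ̄(i-1,n)) * e(s-i+1, n-i+1), where χ̄(i,n) = (-1)^i * C(n-1, i-1) and χ̄(1,n) = -1. Then e(s,n) = C(n, s-1) for all 1 ≤ s ≤ n. -/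
/-!
Since `χ̄(i,n) - χ̄(i-1,n) = (-1)^i C(n,i-1)` by Pascal's rule, substituting the claimed values
`e(s-i+1, n-i+1) = C(n-i+1, s-i)` into the recurrence turns its right-hand side, with `j = i - 1`
and `m = s - 1`, into `∑_{j=1}^m (-1)^(j+1) C(n,j) C(n-j,m-j)`. The subset-of-a-subset identity
`C(n,j) C(n-j,m-j) = C(n,m) C(m,j)` factors out `C(n,m)`, and what remains is the alternating sum
`∑_{j=1}^m (-1)^(j+1) C(m,j) = 1`. Strong induction on `s` finishes the proof.
-/

open Finset

/-- `χ̄(i,n) = (-1)^i * C(n-1, i-1)`; note `χ̄(1,n) = -1`. -/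
noncomputable def chiBar (i n : ℕ) : ℤ := (-1 : ℤ) ^ i * ((n - 1).choose (i - 1))

lemma chiBar_sub_chiBar_pred {i n : ℕ} (hi : 2 ≤ i) (hn : 1 ≤ n) :
    chiBar i n - chiBar (i - 1) n = (-1) ^ i * n.choose (i - 1) := by
  obtain ⟨j, rfl⟩ : ∃ j, i = j + 2 := ⟨i - 2, by omega⟩
  obtain ⟨m, rfl⟩ : ∃ m, n = m + 1 := ⟨n - 1, by omega⟩
  simp only [chiBar, Nat.add_sub_cancel, show j + 2 - 1 = j + 1 by omega, Nat.choose_succ_succ]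
  push_cast
  ring

lemma sum_Icc_one_neg_one_pow_succ_mul_choose {m : ℕ} (hm : m ≠ 0) :
    ∑ j ∈ Icc 1 m, (-1 : ℤ) ^ (j + 1) * m.choose j = 1 := by
  have h := Int.alternating_sum_range_choose_of_ne hm
  rw [range_eq_Ico, sum_eq_sum_Ico_succ_bot (by omega), Ico_add_one_right_eq_Icc] at h
  simp only [pow_succ, mul_neg_one, neg_mul, sum_neg_distrib]
  simpa [add_eq_zero_iff_neg_eq'] using h

lemma sum_Icc_one_neg_one_pow_succ_mul_choose_mul_choose (n : ℕ) {m : ℕ} (hm : m ≠ 0) :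
    ∑ j ∈ Icc 1 m, (-1 : ℤ) ^ (j + 1) * n.choose j * (n - j).choose (m - j) = n.choose m := by
  calc ∑ j ∈ Icc 1 m, (-1 : ℤ) ^ (j + 1) * n.choose j * (n - j).choose (m - j)
      = ∑ j ∈ Icc 1 m, n.choose m * ((-1 : ℤ) ^ (j + 1) * m.choose j) := by
        refine sum_congr rfl fun j hj => ?_
        have h := Nat.choose_mul (n := n) (mem_Icc.mp hj).2
        rw [mul_assoc, ← Nat.cast_mul, ← h]
        push_cast
        ring
    _ = n.choose m := by rw [← mul_sum, sum_Icc_one_neg_one_pow_succ_mul_choose hm, mul_one]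

theorem stmt3 (e : ℕ × ℕ → ℤ)
    (h1 : ∀ n : ℕ, 1 ≤ n → e (1, n) = 1)
    (hrec : ∀ s n : ℕ, 2 ≤ s → s ≤ n →
      e (s, n) = ∑ i ∈ Finset.Icc 2 s,
        (chiBar i n - chiBar (i - 1) n) * e (s - i + 1, n - i + 1)) :
    ∀ s n : ℕ, 1 ≤ s → s ≤ n → e (s, n) = n.choose (s - 1) := by
  intro s
  induction s using Nat.strong_induction_on with
  | _ s ih =>
  intro n hs hsn
  obtain rfl | ⟨m, rfl, hm⟩ : s = 1 ∨ ∃ m, s = m + 1 ∧ m ≠ 0 := by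
    rcases s with _ | _ | m <;> simp_all
  · simp [h1 n hsn]
  rw [hrec (m + 1) n (by omega) hsn, ← map_add_right_Icc 1 m 1, sum_map, Nat.add_sub_cancel,
    ← sum_Icc_one_neg_one_pow_succ_mul_choose_mul_choose n hm]
  refine sum_congr rfl fun j hj => ?_
  obtain ⟨hj1, hjm⟩ := mem_Icc.mp hj
  rw [addRightEmbedding_apply, show m + 1 - (j + 1) + 1 = m - j + 1 by omega,
    show n - (j + 1) + 1 = n - j by omega, chiBar_sub_chiBar_pred (by omega) (by omega),
    ih (m - j + 1) (by omega) (n - j) (by omega) (by omega), Nat.add_sub_cancel, Nat.add_sub_cancel]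
end

section
/- Suppose x_1, ..., x_s are defined by x_1 = b_1 and x_j = b_j - ∑_{i=1}^{j-1} n_{i,j} x_i, where b_j = (-1)^{d'_j - 1 + j} * C(n-1, j-1) for j ≥ 2 and b_1 = 1, with n_{i,j} = (-1)^{k(j-i)} C(n-i, n-j) and d'_j = n(n+k) - (n-j+1)(n+k-j+1). Then x_1 = 1 and x_j = 0 for all 2 ≤ j ≤ s. -/
private lemma negpow_congr (e f : ℕ) (h : Even (e + f)) : (-1:ℤ)^e = (-1)^f := by
  have h2 : (-1:ℤ)^(e+f) = 1 := h.neg_one_pow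
  have hf : (-1:ℤ)^f * (-1)^f = 1 := by
    rw [← pow_add]; exact (Even.add_self f).neg_one_pow
  calc (-1:ℤ)^e = (-1)^e * ((-1)^f * (-1)^f) := by rw [hf, mul_one]
    _ = ((-1)^(e+f)) * (-1)^f := by rw [pow_add]; ring
    _ = (-1)^f := by rw [h2, one_mul]

theorem stmt13 (n k s : ℕ) (hs1 : 1 ≤ s) (hsn : s ≤ n)
    (d' : ℕ → ℕ) (hd : ∀ j, d' j = n * (n + k) - (n - j + 1) * (n + k - j + 1))
    (b : ℕ → ℤ) (hb1 : b 1 = 1)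
    (hb : ∀ j, 2 ≤ j → b j = (-1 : ℤ) ^ (d' j - 1 + j) * ((n - 1).choose (j - 1)))
    (x : ℕ → ℤ) (hx1 : x 1 = b 1)
    (hx : ∀ j, 2 ≤ j → j ≤ s →
      x j = b j - ∑ i ∈ Finset.Icc 1 (j - 1),
        (-1 : ℤ) ^ (k * (j - i)) * ((n - i).choose (n - j)) * x i) :
    x 1 = 1 ∧ ∀ j, 2 ≤ j → j ≤ s → x j = 0 := by
  have hx1' : x 1 = 1 := by rw [hx1, hb1]
  refine ⟨hx1', ?_⟩
  intro j
  induction j using Nat.strong_induction_on with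
  | _ j IH =>
    intro h2 hjs
    rw [hx j h2 hjs]
    have hsum : ∑ i ∈ Finset.Icc 1 (j-1), (-1:ℤ)^(k*(j-i)) * ((n-i).choose (n-j)) * x i
        = (-1:ℤ)^(k*(j-1)) * ((n-1).choose (n-j)) := by
      have hset : Finset.Icc 1 (j-1) = insert 1 (Finset.Icc 2 (j-1)) := by
        ext t; simp only [Finset.mem_Icc, Finset.mem_insert]; omega
      rw [hset, Finset.sum_insert (by simp [Finset.mem_Icc])]
      rw [Finset.sum_eq_zero, add_zero, hx1', mul_one]
      intro i hi
      simp only [Finset.mem_Icc] at hi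
      rw [IH i (by omega) hi.1 (by omega), mul_zero]
    rw [hsum, hb j h2, sub_eq_zero]
    obtain ⟨m, rfl⟩ : ∃ m, j = m + 2 := ⟨j - 2, by omega⟩
    obtain ⟨a, rfl⟩ : ∃ a, n = m + 2 + a := ⟨n - (m + 2), by omega⟩
    have hd' : d' (m+2) = (m+1)*(m+2*a+3+k) := by
      rw [hd]
      have h1 : m + 2 + a - (m + 2) + 1 = a + 1 := by omega
      have h2' : m + 2 + a + k - (m + 2) + 1 = a + k + 1 := by omega
      rw [h1, h2']
      have key : (m+2+a)*(m+2+a+k) = (m+1)*(m+2*a+3+k) + (a+1)*(a+k+1) := by ring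
      rw [key]
      omega
    have hch2 : (m + 2 + a - 1).choose (m + 2 + a - (m + 2)) = (m + 2 + a - 1).choose (m + 2 - 1) := by
      have e1 : m + 2 + a - (m + 2) = a := by omega
      have e2 : m + 2 - 1 = m + 1 := by omega
      have e3 : m + 2 + a - 1 = m + a + 1 := by omega
      rw [e1, e2, e3]
      rw [← Nat.choose_symm (show m + 1 ≤ m + a + 1 by omega)]
      congr 1
      omega
    rw [hch2]
    congr 1
    rw [hd']
    apply negpow_congr
    have hk1 : k * (m + 2 - 1) = k * (m + 1) := by norm_num
    rw [hk1]
    have hkey : Even ((m+1)*(m+2*a+3+k) + (m + 1) + k*(m+1)) := by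
      have heq : (m+1)*(m+2*a+3+k) + (m + 1) + k*(m+1) = (m+1)*(m+2*a+4+2*k) := by ring
      rw [heq]
      rcases Nat.even_or_odd m with ⟨p, rfl⟩ | ⟨p, rfl⟩
      · exact ⟨(p+p+1)*(p+a+2+k), by ring⟩
      · exact ⟨(p+1)*(2*p+1+2*a+4+2*k), by ring⟩
    have heq2 : (m+1)*(m+2*a+3+k) - 1 + (m + 2) + k*(m+1)
        = (m+1)*(m+2*a+3+k) + (m + 1) + k*(m+1) := by
      have hP : 1 ≤ (m+1)*(m+2*a+3+k) := Nat.one_le_iff_ne_zero.mpr (by positivity)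
      generalize (m+1)*(m+2*a+3+k) = P at hP ⊢
      omega
    rw [heq2]
    exact hkey
end
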